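/- Let X be a compact Hausdorff space, α : X → X a continuous map, A : C(X) → C(X) a transfer operator for (X, α), and μ an α-invariant regular Borel probability measure on X. Then for every n ∈ ℕ and every continuous partition of unity D on X, one has τ_n(μ) ≤ Σ_{g ∈ D} μ(g) · ln( μ(Aⁿg) / μ(g) ). -/

import Mathlib

open scoped BigOperators

/-- The summand `μ(g) · ln(m(Aⁿg)/μ(g))` with the conventions: it is `0` whenever
`μ(g) = 0` (regardless of `m(Aⁿg)`), and it is `−∞` when `μ(g) > 0` but `m(Aⁿg) = 0`. -/
noncomputable def tSummand (a b : ℝ) : EReal :=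
  if a = 0 then 0 else if b = 0 then ⊥ else ((a * Real.log (b / a) : ℝ) : EReal)

/-- A continuous partition of unity on `X`. -/
def IsPartitionOfUnity {X : Type*} [TopologicalSpace X] (D : Finset C(X, ℝ)) : Prop :=
  (∀ g ∈ D, 0 ≤ g) ∧ ∑ g ∈ D, g = 1

/-- A positive normalized linear functional on `C(X, ℝ)` (a regular Borel probability
measure, via the Riesz representation theorem). -/
def IsPosNormalized {X : Type*} [TopologicalSpace X] (μ : C(X, ℝ) →ₗ[ℝ] ℝ) : Prop :=
  (∀ f : C(X, ℝ), 0 ≤ f → 0 ≤ μ f) ∧ μ 1 = 1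

/-- `τ_n(μ) = inf_D sup_m Σ_{g ∈ D} μ(g) ln(m(Aⁿg)/μ(g))`. -/
noncomputable def tauN {X : Type*} [TopologicalSpace X] [CompactSpace X] [T2Space X]
    (A : C(X, ℝ) →ₗ[ℝ] C(X, ℝ)) (μ : C(X, ℝ) →ₗ[ℝ] ℝ) (n : ℕ) : EReal :=
  ⨅ (D : Finset C(X, ℝ)) (_ : IsPartitionOfUnity D),
    ⨆ (m : C(X, ℝ) →ₗ[ℝ] ℝ) (_ : IsPosNormalized m),
      ∑ g ∈ D, tSummand (μ g) (m ((A ^ n) g))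

/-!
Fix `D` and `ε > 0`. By compactness there is a partition of unity `(fᵢ)` on the support of each
member of which every `Aⁿg`, `g ∈ D`, is within `ε/2` of a constant; so `fᵢ · Aⁿg ≤ cᵢg fᵢ` with
`∑ᵢ cᵢg μ(fᵢ) ≤ μ(Aⁿg) + ε`. The functions `(fᵢ ∘ αⁿ) · g` form a finer partition of unity, and
the homological identity gives `Aⁿ((fᵢ ∘ αⁿ) · g) = fᵢ · Aⁿg`. By invariance of `μ`, the masses
`μ((fᵢ ∘ αⁿ) · g)` add up to `μ(fᵢ)` over `g` and to `μ(g)` over `i`. Hence, for every state `m`,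
the sum for the finer partition splits into the Gibbs term `∑ᵢ μ(fᵢ) ln(m(fᵢ)/μ(fᵢ)) ≤ 0` plus,
for each `g`, a sum that the log-sum inequality bounds by `μ(g) ln((μ(Aⁿg) + ε)/μ(g))`.
Finally let `ε → 0`.
-/

open Real Finset Filter Topology

section LogSum

variable {κ : Type*} {s : Finset κ}

theorem mul_log_div_le_add {p y P Y : ℝ} (hp : 0 ≤ p) (hy : 0 ≤ y) (hpy : 0 < p → 0 < y)
    (hP : 0 < P) (hY : 0 < Y) :
    p * log (y / p) ≤ p * log (Y / P) + (P / Y * y - p) := by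
  rcases hp.eq_or_lt with rfl | hp
  · simpa using by positivity
  have hy := hpy hp
  have hsplit : log (y / p) = log (y * P / (p * Y)) + log (Y / P) := by
    rw [← log_mul (by positivity) (by positivity)]
    congr 1
    field_simp
  calc p * log (y / p) = p * log (y * P / (p * Y)) + p * log (Y / P) := by rw [hsplit, mul_add]
    _ ≤ p * (y * P / (p * Y) - 1) + p * log (Y / P) := by
        gcongr
        exact log_le_sub_one_of_pos (by positivity)
    _ = p * log (Y / P) + (P / Y * y - p) := by field_simp; ring

/-- The log-sum inequality. -/
theorem sum_mul_log_div_le {p y : κ → ℝ} {Y : ℝ} (hp : ∀ k ∈ s, 0 ≤ p k)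
    (hy : ∀ k ∈ s, 0 ≤ y k) (hpy : ∀ k ∈ s, 0 < p k → 0 < y k) (hY : ∑ k ∈ s, y k ≤ Y) :
    ∑ k ∈ s, p k * log (y k / p k) ≤ (∑ k ∈ s, p k) * log (Y / ∑ k ∈ s, p k) := by
  set P := ∑ k ∈ s, p k
  rcases (sum_nonneg hp).eq_or_lt with hP | hP
  · have hp0 : ∀ k ∈ s, p k = 0 := (sum_eq_zero_iff_of_nonneg hp).1 hP.symm
    rw [show P = 0 from hP.symm, zero_mul]
    exact (sum_eq_zero fun k hk => by simp [hp0 k hk]).le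
  obtain ⟨k, hk, hpk⟩ := (sum_pos_iff_of_nonneg hp).1 hP
  have hYpos : 0 < Y := (hpy k hk hpk).trans_le ((single_le_sum hy hk).trans hY)
  calc ∑ k ∈ s, p k * log (y k / p k)
      ≤ ∑ k ∈ s, (p k * log (Y / P) + (P / Y * y k - p k)) :=
        sum_le_sum fun k hk => mul_log_div_le_add (hp k hk) (hy k hk) (hpy k hk) hP hYpos
    _ = P * log (Y / P) + (P / Y * ∑ k ∈ s, y k - P) := by
        rw [sum_add_distrib, sum_sub_distrib, ← sum_mul, ← mul_sum]
    _ ≤ P * log (Y / P) + (P / Y * Y - P) := by gcongr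
    _ = P * log (Y / P) := by field_simp; ring

theorem sum_mul_log_div_nonpos {p y : κ → ℝ} (hp : ∀ k ∈ s, 0 ≤ p k) (hy : ∀ k ∈ s, 0 ≤ y k)
    (hpy : ∀ k ∈ s, 0 < p k → 0 < y k) (hsum : ∑ k ∈ s, p k = ∑ k ∈ s, y k) :
    ∑ k ∈ s, p k * log (y k / p k) ≤ 0 := by
  refine (sum_mul_log_div_le hp hy hpy hsum.ge).trans_eq ?_
  rcases eq_or_ne (∑ k ∈ s, p k) 0 with h | h <;> simp [h]

end LogSum

theorem sum_sum_mul_log_div_le {ι γ : Type*} {s : Finset ι} {t : Finset γ} {P c : ι → γ → ℝ}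
    {q r : ι → ℝ} {Y : γ → ℝ} (hP : ∀ i ∈ s, ∀ g ∈ t, 0 ≤ P i g)
    (hq : ∀ i ∈ s, ∑ g ∈ t, P i g = q i) (hc : ∀ i ∈ s, ∀ g ∈ t, 0 ≤ c i g)
    (hr : ∀ i ∈ s, 0 ≤ r i) (hcr : ∀ i ∈ s, ∀ g ∈ t, 0 < P i g → 0 < c i g * r i)
    (hqr : ∑ i ∈ s, q i = ∑ i ∈ s, r i) (hY : ∀ g ∈ t, ∑ i ∈ s, c i g * q i ≤ Y g) :
    ∑ i ∈ s, ∑ g ∈ t, P i g * log (c i g * r i / P i g)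
      ≤ ∑ g ∈ t, (∑ i ∈ s, P i g) * log (Y g / ∑ i ∈ s, P i g) := by
  have hPq : ∀ i ∈ s, ∀ g ∈ t, P i g ≤ q i := fun i hi g hg =>
    hq i hi ▸ single_le_sum (hP i hi) hg
  have hq0 : ∀ i ∈ s, 0 ≤ q i := fun i hi => hq i hi ▸ sum_nonneg (hP i hi)
  have hpos : ∀ i ∈ s, ∀ g ∈ t, 0 < P i g → 0 < c i g ∧ 0 < r i ∧ 0 < q i := by
    intro i hi g hg h
    have hr' : 0 < r i := (hr i hi).lt_of_ne fun h0 => by simpa [← h0] using hcr i hi g hg h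
    exact ⟨pos_of_mul_pos_left (hcr i hi g hg h) hr'.le, hr', h.trans_le (hPq i hi g hg)⟩
  -- `log (c r / P) = log (c q / P) + log (r / q)` splits off a Gibbs term for the `q i`
  have hsplit : ∀ i ∈ s, ∀ g ∈ t, P i g * log (c i g * r i / P i g)
      = P i g * log (c i g * q i / P i g) + P i g * log (r i / q i) := by
    intro i hi g hg
    rcases (hP i hi g hg).eq_or_lt with h0 | h
    · simp [← h0]
    obtain ⟨hc', hr', hq'⟩ := hpos i hi g hg h
    rw [← mul_add, ← log_mul (by positivity) (by positivity)]
    congr 2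
    field_simp
  have hgibbs : ∑ i ∈ s, q i * log (r i / q i) ≤ 0 := by
    refine sum_mul_log_div_nonpos hq0 hr (fun i hi hqi => ?_) hqr
    obtain ⟨g, hg, h⟩ := (sum_pos_iff_of_nonneg (hP i hi)).1 (hq i hi ▸ hqi)
    exact (hpos i hi g hg h).2.1
  have hlogsum : ∀ g ∈ t, ∑ i ∈ s, P i g * log (c i g * q i / P i g)
      ≤ (∑ i ∈ s, P i g) * log (Y g / ∑ i ∈ s, P i g) := fun g hg =>
    sum_mul_log_div_le (fun i hi => hP i hi g hg) (fun i hi => mul_nonneg (hc i hi g hg) (hq0 i hi))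
      (fun i hi h => mul_pos (hpos i hi g hg h).1 (hpos i hi g hg h).2.2) (hY g hg)
  calc ∑ i ∈ s, ∑ g ∈ t, P i g * log (c i g * r i / P i g)
      = ∑ i ∈ s, ∑ g ∈ t, P i g * log (c i g * q i / P i g) + ∑ i ∈ s, q i * log (r i / q i) := by
        rw [← sum_add_distrib]
        refine sum_congr rfl fun i hi => ?_
        rw [sum_congr rfl (hsplit i hi), sum_add_distrib, ← sum_mul, hq i hi]
    _ ≤ ∑ g ∈ t, (∑ i ∈ s, P i g) * log (Y g / ∑ i ∈ s, P i g) + 0 := by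
        rw [sum_comm]
        exact add_le_add (sum_le_sum hlogsum) hgibbs
    _ = _ := add_zero _

theorem EReal.coe_finset_sum {ι : Type*} (s : Finset ι) (f : ι → ℝ) :
    ((∑ i ∈ s, f i : ℝ) : EReal) = ∑ i ∈ s, (f i : EReal) :=
  map_sum (⟨⟨(↑), EReal.coe_zero⟩, EReal.coe_add⟩ : ℝ →+ EReal) f s

theorem EReal.finset_sum_ne_top {ι : Type*} {s : Finset ι} {f : ι → EReal}
    (h : ∀ i ∈ s, f i ≠ ⊤) : ∑ i ∈ s, f i ≠ ⊤ := by
  classical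
  induction s using Finset.induction_on with
  | empty => simp
  | insert i s hi ih =>
    rw [sum_insert hi]
    exact (EReal.add_lt_top (h i (mem_insert_self i s))
      (ih fun j hj => h j (mem_insert_of_mem hj))).ne

theorem EReal.tendsto_finset_sum {ι α : Type*} {l : Filter α} {s : Finset ι}
    {f : ι → α → EReal} {a : ι → EReal} (hf : ∀ i ∈ s, Tendsto (f i) l (𝓝 (a i)))
    (ha : ∀ i ∈ s, a i ≠ ⊤) : Tendsto (fun x => ∑ i ∈ s, f i x) l (𝓝 (∑ i ∈ s, a i)) := by
  classical
  induction s using Finset.induction_on with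
  | empty => simpa using tendsto_const_nhds
  | insert i s hi ih =>
    simp only [sum_insert hi]
    have ha' : ∀ j ∈ s, a j ≠ ⊤ := fun j hj => ha j (mem_insert_of_mem hj)
    exact (EReal.continuousAt_add (.inl (ha i (mem_insert_self i s)))
      (.inr (EReal.finset_sum_ne_top ha'))).tendsto.comp
      ((hf i (mem_insert_self i s)).prodMk_nhds (ih (fun j hj => hf j (mem_insert_of_mem hj)) ha'))

theorem tSummand_zero_left (b : ℝ) : tSummand 0 b = 0 := if_pos rfl

theorem tSummand_ne_top (a b : ℝ) : tSummand a b ≠ ⊤ := by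
  unfold tSummand
  split_ifs
  exacts [EReal.zero_ne_top, bot_ne_top, EReal.coe_ne_top _]

theorem tSummand_of_pos {a b : ℝ} (hb : 0 < b) :
    tSummand a b = ((a * log (b / a) : ℝ) : EReal) := by
  unfold tSummand
  split_ifs with ha hb0
  · simp [ha]
  · exact absurd hb0 hb.ne'
  · rfl

theorem tSummand_le_coe {a b y : ℝ} (ha : 0 ≤ a) (hb : 0 ≤ b) (hby : b ≤ y) :
    tSummand a b ≤ ((a * log (y / a) : ℝ) : EReal) := by
  unfold tSummand
  split_ifs with ha0 hb0
  · simp [ha0]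
  · exact bot_le
  · have hb' := hb.lt_of_ne' hb0
    have ha' := ha.lt_of_ne' ha0
    exact EReal.coe_le_coe_iff.2 (by gcongr)

theorem tSummand_mul_add_mul_one_sub {t : ℝ} (ht0 : 0 < t) (ht1 : t < 1) (a b : ℝ) :
    tSummand (t * a) (t * b) + tSummand ((1 - t) * a) ((1 - t) * b) = tSummand a b := by
  have ht1' : 0 < 1 - t := sub_pos.2 ht1
  unfold tSummand
  by_cases ha : a = 0
  · simp [ha]
  by_cases hb : b = 0
  · simp [ha, hb, ht0.ne', ht1'.ne']
  simp only [ha, hb, ht0.ne', ht1'.ne', mul_eq_zero, or_self, if_false,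
    mul_div_mul_left _ _ ht0.ne', mul_div_mul_left _ _ ht1'.ne', ← EReal.coe_add]
  congr 1
  ring

theorem tendsto_tSummand_add {a b : ℝ} (ha : 0 ≤ a) (hb : 0 ≤ b) :
    Tendsto (fun ε => tSummand a (b + ε)) (𝓝[>] 0) (𝓝 (tSummand a b)) := by
  rcases ha.eq_or_lt with rfl | ha
  · simp [tSummand_zero_left]
  have hcoe : (fun ε => ((a * log ((b + ε) / a) : ℝ) : EReal)) =ᶠ[𝓝[>] 0]
      fun ε => tSummand a (b + ε) :=
    eventually_nhdsWithin_of_forall fun ε (hε : 0 < ε) => (tSummand_of_pos (by linarith)).symm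
  refine Tendsto.congr' hcoe ?_
  rcases hb.eq_or_lt with rfl | hb
  · rw [show tSummand a 0 = ⊥ by simp [tSummand, ha.ne']]
    refine EReal.tendsto_coe_atBot.comp (Tendsto.const_mul_atBot ha ?_)
    simp only [zero_add]
    refine tendsto_log_nhdsGT_zero.comp (tendsto_nhdsWithin_iff.2 ⟨?_, ?_⟩)
    · simpa using ((continuous_id.div_const a).tendsto 0).mono_left nhdsWithin_le_nhds
    · exact eventually_nhdsWithin_of_forall fun ε (hε : 0 < ε) => div_pos hε ha
  · rw [tSummand_of_pos hb]
    refine EReal.tendsto_coe.2 (Tendsto.mono_left ?_ nhdsWithin_le_nhds)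
    have : ContinuousAt (fun ε => a * log ((b + ε) / a)) 0 :=
      continuousAt_const.mul ((continuousAt_log (by positivity)).comp (by fun_prop))
    simpa using this.tendsto

theorem sum_sum_tSummand_le {ι γ : Type*} {s : Finset ι} {t : Finset γ} {P B c : ι → γ → ℝ}
    {q r : ι → ℝ} {a Y : γ → ℝ} (hP : ∀ i ∈ s, ∀ g ∈ t, 0 ≤ P i g)
    (hB : ∀ i ∈ s, ∀ g ∈ t, 0 ≤ B i g) (hBc : ∀ i ∈ s, ∀ g ∈ t, B i g ≤ c i g * r i)
    (hq : ∀ i ∈ s, ∑ g ∈ t, P i g = q i) (ha : ∀ g ∈ t, ∑ i ∈ s, P i g = a g)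
    (hc : ∀ i ∈ s, ∀ g ∈ t, 0 ≤ c i g) (hr : ∀ i ∈ s, 0 ≤ r i)
    (hqr : ∑ i ∈ s, q i = ∑ i ∈ s, r i) (hY : ∀ g ∈ t, ∑ i ∈ s, c i g * q i ≤ Y g)
    (hY0 : ∀ g ∈ t, 0 < Y g) :
    ∑ i ∈ s, ∑ g ∈ t, tSummand (P i g) (B i g) ≤ ∑ g ∈ t, tSummand (a g) (Y g) := by
  by_cases hcr : ∀ i ∈ s, ∀ g ∈ t, 0 < P i g → 0 < c i g * r i
  · calc ∑ i ∈ s, ∑ g ∈ t, tSummand (P i g) (B i g)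
        ≤ ∑ i ∈ s, ∑ g ∈ t, ((P i g * log (c i g * r i / P i g) : ℝ) : EReal) :=
          sum_le_sum fun i hi => sum_le_sum fun g hg =>
            tSummand_le_coe (hP i hi g hg) (hB i hi g hg) (hBc i hi g hg)
      _ ≤ ∑ g ∈ t, (((∑ i ∈ s, P i g) * log (Y g / ∑ i ∈ s, P i g) : ℝ) : EReal) := by
          simp only [← EReal.coe_finset_sum, EReal.coe_le_coe_iff]
          exact sum_sum_mul_log_div_le hP hq hc hr hcr hqr hY
      _ = ∑ g ∈ t, tSummand (a g) (Y g) :=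
          sum_congr rfl fun g hg => by rw [ha g hg, tSummand_of_pos (hY0 g hg)]
  · push Not at hcr
    obtain ⟨i, hi, g, hg, hPpos, hcr0⟩ := hcr
    have hB0 : B i g = 0 := le_antisymm ((hBc i hi g hg).trans hcr0) (hB i hi g hg)
    have hbot : tSummand (P i g) (B i g) = ⊥ := by simp [tSummand, hPpos.ne', hB0]
    have hrow : ∑ g ∈ t, tSummand (P i g) (B i g) = ⊥ := WithBot.sum_eq_bot_iff.2 ⟨g, hg, hbot⟩
    have hsum : ∑ i ∈ s, ∑ g ∈ t, tSummand (P i g) (B i g) = ⊥ :=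
      WithBot.sum_eq_bot_iff.2 ⟨i, hi, hrow⟩
    exact hsum ▸ bot_le

/-- A partition of unity in the sense of `IsPartitionOfUnity` is a `Finset`, so the repeated
members of a family have to be made distinct: splitting `v k` into `t • v k` and `(1 - t) • v k`
for a generic `t` does so without changing any split-additive sum. -/
theorem exists_finset_splitting_family {V M κ : Type*} [AddCommGroup V] [Module ℝ V]
    [AddCommMonoid M] (s : Finset κ) (v : κ → V) :
    ∃ E : Finset V, (∀ e ∈ E, ∃ k ∈ s, ∃ t : ℝ, 0 < t ∧ e = t • v k) ∧
      ∑ e ∈ E, e = ∑ k ∈ s, v k ∧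
      ∀ Φ : V → M, Φ 0 = 0 → (∀ x (t : ℝ), 0 < t → t < 1 → Φ (t • x) + Φ ((1 - t) • x) = Φ x) →
        ∑ e ∈ E, Φ e = ∑ k ∈ s, Φ (v k) := by
  classical
  induction s using Finset.induction_on with
  | empty => exact ⟨∅, by simp, by simp, by simp⟩
  | insert k s hk ih =>
    obtain ⟨E, hE, hEsum, hEΦ⟩ := ih
    have hE' : ∀ e ∈ E, ∃ j ∈ insert k s, ∃ t : ℝ, 0 < t ∧ e = t • v j := fun e he => by
      obtain ⟨j, hj, t, ht, rfl⟩ := hE e he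
      exact ⟨j, mem_insert_of_mem hj, t, ht, rfl⟩
    rcases eq_or_ne (v k) 0 with h0 | h0
    · refine ⟨E, hE', by simp [sum_insert hk, h0, hEsum], fun Φ hΦ0 hΦ => ?_⟩
      rw [sum_insert hk, h0, hΦ0, zero_add, hEΦ Φ hΦ0 hΦ]
    have hinj := smul_left_injective ℝ h0
    have hbad : {t : ℝ | t • v k ∈ E ∨ (1 - t) • v k ∈ E}.Finite := by
      have h1 : {t : ℝ | t • v k ∈ E}.Finite := E.finite_toSet.preimage hinj.injOn
      exact h1.union (h1.preimage sub_right_injective.injOn)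
    obtain ⟨t, ⟨ht0, ht⟩, htE⟩ :=
      ((Set.Ioo_infinite (by norm_num : (0 : ℝ) < 1 / 2)).sdiff hbad).nonempty
    simp only [Set.mem_ofPred_eq, not_or] at htE
    have hne : t • v k ≠ (1 - t) • v k := fun h => by linarith [hinj h]
    have hnot : t • v k ∉ insert ((1 - t) • v k) E := by simp [hne, htE.1]
    refine ⟨insert (t • v k) (insert ((1 - t) • v k) E), ?_, ?_, fun Φ hΦ0 hΦ => ?_⟩
    · intro e he
      simp only [mem_insert] at he
      rcases he with rfl | rfl | he
      · exact ⟨k, mem_insert_self k s, t, ht0, rfl⟩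
      · exact ⟨k, mem_insert_self k s, 1 - t, by linarith, rfl⟩
      · exact hE' e he
    · rw [sum_insert hnot, sum_insert htE.2, hEsum, sum_insert hk, ← add_assoc, ← add_smul]
      simp
    · rw [sum_insert hnot, sum_insert htE.2, hEΦ Φ hΦ0 hΦ, sum_insert hk, ← add_assoc,
        hΦ _ _ ht0 (by linarith)]

theorem Module.End.pow_apply_mul_of_apply_mul {R M : Type*} [CommSemiring R]
    [NonUnitalNonAssocSemiring M] [Module R M] {A K : Module.End R M}
    (h : ∀ f g, A (K f * g) = f * A g) (n : ℕ) (f g : M) :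
    (A ^ n) ((K ^ n) f * g) = f * (A ^ n) g := by
  induction n generalizing f g with
  | zero => simp
  | succ n ih => simp only [pow_succ A, pow_succ' K, Module.End.mul_apply, h, ih]

theorem Module.End.pow_apply_nonneg {R M : Type*} [Semiring R] [AddCommMonoid M] [Module R M]
    [Preorder M] {A : Module.End R M} (hA : ∀ f, 0 ≤ f → 0 ≤ A f) (n : ℕ) {f : M} (hf : 0 ≤ f) :
    0 ≤ (A ^ n) f := by
  rw [Module.End.pow_apply]
  exact Set.MapsTo.iterate (f := A) (s := {f | 0 ≤ f}) hA n hf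

section ContinuousFunctions

variable {X : Type*} [TopologicalSpace X]

theorem IsPosNormalized.monotone {m : C(X, ℝ) →ₗ[ℝ] ℝ}
    (hm : IsPosNormalized m) : Monotone m := fun a b hab => by
  simpa using hm.1 (b - a) (sub_nonneg.2 hab)

theorem IsPosNormalized.sum_mul_apply_le {ι : Type*} [Fintype ι]
    {μ : C(X, ℝ) →ₗ[ℝ] ℝ} (hμ : IsPosNormalized μ) {f : ι → C(X, ℝ)} (hf1 : ∑ i, f i = 1)
    {c : ι → ℝ} {h : C(X, ℝ)} {ε : ℝ} (hc : ∀ i, c i • f i ≤ h * f i + ε • f i) :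
    ∑ i, c i * μ (f i) ≤ μ h + ε :=
  calc ∑ i, c i * μ (f i) = μ (∑ i, c i • f i) := by simp [map_sum]
    _ ≤ μ (∑ i, (h * f i + ε • f i)) := hμ.monotone (sum_le_sum fun i _ => hc i)
    _ = μ h + ε := by
        rw [sum_add_distrib, ← mul_sum, ← smul_sum, hf1, mul_one, map_add, map_smul, hμ.2,
          smul_eq_mul, mul_one]

theorem tauN_le_iSup_sum_of_family [CompactSpace X] [T2Space X] (A : C(X, ℝ) →ₗ[ℝ] C(X, ℝ))
    (μ : C(X, ℝ) →ₗ[ℝ] ℝ) (n : ℕ) {κ : Type*} (s : Finset κ) (v : κ → C(X, ℝ))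
    (hv : ∀ k ∈ s, 0 ≤ v k) (hv1 : ∑ k ∈ s, v k = 1) :
    tauN A μ n ≤ ⨆ (m : C(X, ℝ) →ₗ[ℝ] ℝ) (_ : IsPosNormalized m),
      ∑ k ∈ s, tSummand (μ (v k)) (m ((A ^ n) (v k))) := by
  obtain ⟨E, hE, hEsum, hEΦ⟩ := exists_finset_splitting_family (M := EReal) s v
  have hEpart : IsPartitionOfUnity E := by
    refine ⟨fun e he => ?_, hEsum.trans hv1⟩
    obtain ⟨k, hk, t, ht, rfl⟩ := hE e he
    exact smul_nonneg ht.le (hv k hk)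
  refine (iInf₂_le E hEpart).trans (iSup₂_mono fun m _ => (hEΦ _ ?_ fun x t ht0 ht1 => ?_).le)
  · simp [tSummand_zero_left]
  · simp only [map_smul, smul_eq_mul]
    exact tSummand_mul_add_mul_one_sub ht0 ht1 _ _

theorem exists_partitionOfUnity_abs_sub_lt [CompactSpace X] [T2Space X] {γ : Type*}
    (t : Finset γ) (H : γ → C(X, ℝ)) {δ : ℝ} (hδ : 0 < δ) :
    ∃ (S : Finset X) (f : S → C(X, ℝ)), (∀ i, 0 ≤ f i) ∧ ∑ i, f i = 1 ∧
      ∀ i, ∀ g ∈ t, ∀ y, f i y ≠ 0 → |H g y - H g i| < δ := by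
  set U : X → Set X := fun x => {y | ∀ g ∈ t, |H g y - H g x| < δ}
  have hUo : ∀ x, IsOpen (U x) := fun x => by
    simp only [U, Set.ofPred_forall]
    exact isOpen_biInter_finset fun g _ => isOpen_lt (by fun_prop) continuous_const
  obtain ⟨S, hS⟩ := isCompact_univ.elim_finite_subcover U hUo fun x _ =>
    Set.mem_iUnion.2 ⟨x, fun g _ => by simpa using hδ⟩
  obtain ⟨f, hf⟩ := PartitionOfUnity.exists_isSubordinate isClosed_univ (fun i : S => U i)
    (fun i => hUo i) fun y _ => by simpa using hS (Set.mem_univ y)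
  refine ⟨S, fun i => f i, fun i y => f.nonneg i y, ?_, fun i g hg y hy => ?_⟩
  · ext y
    simpa [finsum_eq_sum_of_fintype] using f.sum_eq_one (Set.mem_univ y)
  · exact hf i (subset_tsupport _ hy) g hg

theorem mul_le_smul_and_smul_le_of_abs_sub_lt {f h : C(X, ℝ)} {x : X} {δ : ℝ} (hf : 0 ≤ f)
    (hfh : ∀ y, f y ≠ 0 → |h y - h x| < δ) :
    f * h ≤ (h x + δ) • f ∧ (h x + δ) • f ≤ h * f + (2 * δ) • f := by
  have key : ∀ y, f y * h y ≤ (h x + δ) * f y ∧ (h x + δ) * f y ≤ h y * f y + 2 * δ * f y := by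
    intro y
    rcases eq_or_ne (f y) 0 with h0 | h0
    · simp [h0]
    obtain ⟨h1, h2⟩ := abs_lt.1 (hfh y h0)
    have hfy : 0 ≤ f y := by simpa using hf y
    constructor <;> nlinarith
  exact ⟨fun y => by simpa using (key y).1, fun y => by simpa using (key y).2⟩

end ContinuousFunctions

section Koopman

variable {X : Type*} [TopologicalSpace X] (α : C(X, X))

noncomputable def koopman : Module.End ℝ C(X, ℝ) :=
  (ContinuousMap.compRightAlgHom ℝ ℝ α).toLinearMap

theorem koopman_apply (f : C(X, ℝ)) : koopman α f = f.comp α := rfl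

theorem koopman_pow_apply_nonneg (n : ℕ) {f : C(X, ℝ)} (hf : 0 ≤ f) : 0 ≤ (koopman α ^ n) f :=
  Module.End.pow_apply_nonneg (fun f hf => ContinuousMap.le_def.2 fun x => by
    simpa [koopman_apply] using ContinuousMap.le_def.1 hf (α x)) n hf

theorem koopman_pow_apply_one (n : ℕ) : (koopman α ^ n) 1 = 1 := by
  rw [Module.End.pow_apply]
  exact Function.iterate_fixed rfl n

theorem apply_koopman_pow_apply {μ : C(X, ℝ) →ₗ[ℝ] ℝ} (hμ : ∀ f : C(X, ℝ), μ (f.comp α) = μ f)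
    (n : ℕ) (f : C(X, ℝ)) : μ ((koopman α ^ n) f) = μ f := by
  induction n generalizing f with
  | zero => rw [pow_zero, Module.End.one_apply]
  | succ n ih => rw [pow_succ, Module.End.mul_apply, ih, koopman_apply, hμ]

end Koopman

theorem tauN_le_sum_tSummand_add {X : Type*} [TopologicalSpace X] [CompactSpace X] [T2Space X]
    (α : C(X, X)) (A : C(X, ℝ) →ₗ[ℝ] C(X, ℝ))
    (hA_pos : ∀ f : C(X, ℝ), 0 ≤ f → 0 ≤ A f)
    (hA_hom : ∀ f g : C(X, ℝ), A ((f.comp α) * g) = f * A g)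
    (μ : C(X, ℝ) →ₗ[ℝ] ℝ) (hμ : IsPosNormalized μ)
    (hμinv : ∀ f : C(X, ℝ), μ (f.comp α) = μ f)
    (n : ℕ) (D : Finset C(X, ℝ)) (hD : IsPartitionOfUnity D) {ε : ℝ} (hε : 0 < ε) :
    tauN A μ n ≤ ∑ g ∈ D, tSummand (μ g) (μ ((A ^ n) g) + ε) := by
  obtain ⟨S, f, hf0, hf1, hosc⟩ :=
    exists_partitionOfUnity_abs_sub_lt D (fun g => (A ^ n) g) (half_pos hε)
  set c : S → C(X, ℝ) → ℝ := fun i g => (A ^ n) g i + ε / 2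
  have hfc : ∀ i, ∀ g ∈ D, f i * (A ^ n) g ≤ c i g • f i ∧
      c i g • f i ≤ (A ^ n) g * f i + ε • f i := fun i g hg => by
    simpa [mul_div_cancel₀] using mul_le_smul_and_smul_le_of_abs_sub_lt (hf0 i) (hosc i g hg)
  have hAn : ∀ g, 0 ≤ g → 0 ≤ (A ^ n) g := fun g => Module.End.pow_apply_nonneg hA_pos n
  set w : S → C(X, ℝ) := fun i => (koopman α ^ n) (f i)
  have hw0 : ∀ i, 0 ≤ w i := fun i => koopman_pow_apply_nonneg α n (hf0 i)
  have hw1 : ∑ i, w i = 1 := by rw [← map_sum, hf1, koopman_pow_apply_one]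
  have hAw : ∀ i g, (A ^ n) (w i * g) = f i * (A ^ n) g := fun i g =>
    Module.End.pow_apply_mul_of_apply_mul (K := koopman α) hA_hom n _ _
  refine (tauN_le_iSup_sum_of_family A μ n (univ ×ˢ D) (fun p => w p.1 * p.2)
    (fun p hp => mul_nonneg (hw0 _) (hD.1 _ (mem_product.1 hp).2)) ?_).trans
    (iSup₂_le fun m hm => ?_)
  · rw [sum_product, ← hw1]
    exact sum_congr rfl fun i _ =>
      (mul_sum D (fun g => g) (w i)).symm.trans (by rw [hD.2, mul_one])
  rw [sum_product]
  refine sum_sum_tSummand_le (q := fun i => μ (f i)) (r := fun i => m (f i)) (c := c)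
    (fun i _ g hg => hμ.1 _ (mul_nonneg (hw0 i) (hD.1 g hg)))
    (fun i _ g hg => hm.1 _ (hAn _ (mul_nonneg (hw0 i) (hD.1 g hg))))
    (fun i _ g hg => ?_) (fun i _ => ?_) (fun g _ => ?_) (fun i _ g hg => ?_)
    (fun i _ => hm.1 _ (hf0 i)) ?_ (fun g hg => ?_) (fun g hg => ?_)
  · simpa [hAw] using hm.monotone (hfc i g hg).1
  · rw [← map_sum μ (fun g => w i * g), ← mul_sum, hD.2, mul_one, apply_koopman_pow_apply α hμinv]
  · rw [← map_sum, ← sum_mul, hw1, one_mul]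
  · have : 0 ≤ (A ^ n) g i := ContinuousMap.le_def.1 (hAn g (hD.1 g hg)) i
    simp only [c]
    positivity
  · rw [← map_sum, ← map_sum, hf1, hμ.2, hm.2]
  · exact hμ.sum_mul_apply_le hf1 fun i => (hfc i g hg).2
  · linarith [hμ.1 _ (hAn g (hD.1 g hg))]

theorem tauN_le_eval_at_mu_general
    {X : Type*} [TopologicalSpace X] [CompactSpace X] [T2Space X]
    (α : C(X, X)) (A : C(X, ℝ) →ₗ[ℝ] C(X, ℝ))
    (hA_pos : ∀ f : C(X, ℝ), 0 ≤ f → 0 ≤ A f)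
    (hA_hom : ∀ f g : C(X, ℝ), A ((f.comp α) * g) = f * A g)
    (μ : C(X, ℝ) →ₗ[ℝ] ℝ) (hμ : IsPosNormalized μ)
    (hμinv : ∀ f : C(X, ℝ), μ (f.comp α) = μ f)
    (n : ℕ)
    (D : Finset C(X, ℝ)) (hD : IsPartitionOfUnity D) :
    tauN A μ n ≤ ∑ g ∈ D, tSummand (μ g) (μ ((A ^ n) g)) := by
  have hlim : Tendsto (fun ε => ∑ g ∈ D, tSummand (μ g) (μ ((A ^ n) g) + ε)) (𝓝[>] 0)
      (𝓝 (∑ g ∈ D, tSummand (μ g) (μ ((A ^ n) g)))) :=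
    EReal.tendsto_finset_sum (fun g hg => tendsto_tSummand_add (hμ.1 g (hD.1 g hg))
      (hμ.1 _ (Module.End.pow_apply_nonneg hA_pos n (hD.1 g hg)))) fun g _ => tSummand_ne_top _ _
  exact ge_of_tendsto hlim (eventually_nhdsWithin_of_forall fun ε hε =>
    tauN_le_sum_tSummand_add α A hA_pos hA_hom μ hμ hμinv n D hD hε)

/-- For an `α`-invariant measure `μ`, any `n ≥ 1` with `τ_n(μ) > −∞`, and any continuous
partition of unity `D`, one has `τ_n(μ) ≤ Σ_{g ∈ D} μ(g) ln(μ(Aⁿg)/μ(g))`. -/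
theorem tauN_le_eval_at_mu
    {X : Type*} [TopologicalSpace X] [CompactSpace X] [T2Space X]
    (α : C(X, X)) (A : C(X, ℝ) →ₗ[ℝ] C(X, ℝ))
    (hA_pos : ∀ f : C(X, ℝ), 0 ≤ f → 0 ≤ A f)
    (hA_hom : ∀ f g : C(X, ℝ), A ((f.comp α) * g) = f * A g)
    (μ : C(X, ℝ) →ₗ[ℝ] ℝ) (hμ : IsPosNormalized μ)
    (hμinv : ∀ f : C(X, ℝ), μ (f.comp α) = μ f)
    (n : ℕ) (hn : 0 < n) (hfin : tauN A μ n ≠ ⊥)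
    (D : Finset C(X, ℝ)) (hD : IsPartitionOfUnity D) :
    tauN A μ n ≤ ∑ g ∈ D, tSummand (μ g) (μ ((A ^ n) g)) :=
  tauN_le_eval_at_mu_general α A hA_pos hA_hom μ hμ hμinv n D hD
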